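/- Let G be a finite simple graph on n vertices that admits a proper coloring with k colors. Then G admits a proper coloring with at most k + ⌈√n⌉ colors in which every color class contains at most 2⌈√n⌉ vertices. -/

import Mathlib

/-!
Enumerate each colour class and cut it into consecutive chunks of `s = ⌈√n⌉` vertices; chunk `q`
of class `i` receives the new colour `(i, q)`. A class of `m` vertices is cut into at most
`m / s + 1` chunks, so at most `k + n / s ≤ k + s` colours are used, and every new class has at
most `s` vertices.
-/

open SimpleGraph Finset Fintype

theorem Nat.sum_div_le_sum_div {ι : Type*} (t : Finset ι) (a : ι → ℕ) {s : ℕ} (hs : 0 < s) :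
    ∑ i ∈ t, a i / s ≤ (∑ i ∈ t, a i) / s :=
  (Nat.le_div_iff_mul_le hs).2 <| by
    rw [Finset.sum_mul]
    exact Finset.sum_le_sum fun i _ => Nat.div_mul_le_self (a i) s

theorem Nat.le_ceil_sqrt_mul_self (n : ℕ) : n ≤ ⌈√(n : ℝ)⌉₊ * ⌈√(n : ℝ)⌉₊ := by
  have h := (Real.sqrt_le_left (Nat.cast_nonneg ⌈√(n : ℝ)⌉₊)).1 (Nat.le_ceil _)
  exact_mod_cast h.trans_eq (sq _)

theorem Fintype.exists_fin_div_succ_card_fiber_le (α : Type*) [Fintype α] {s : ℕ} (hs : 0 < s) :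
    ∃ g : α → Fin (card α / s + 1), ∀ q, #{x | g x = q} ≤ s := by
  classical
  let r : α → ℕ := fun x => equivFin α x
  let g : α → Fin (card α / s + 1) := fun x =>
    ⟨r x / s, Nat.lt_succ_of_le (Nat.div_le_div_right (equivFin α x).is_lt.le)⟩
  refine ⟨g, fun q => ?_⟩
  have hr : Set.InjOn r {x | g x = q} := fun x _ y _ h => (equivFin α).injective (Fin.ext h)
  calc #{x | g x = q} ≤ #(Ico (q * s) (q * s + s)) :=
        card_le_card_of_injOn r (fun x hx => ?_) (by simpa using hr)
    _ = s := by simp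
  have := (Nat.div_eq_iff hs).1 (congrArg Fin.val (mem_filter.1 hx).2)
  simp only [coe_Ico, Set.mem_Ico]
  omega

theorem card_fiber_comp_le_of_injective {V α β : Type*} [Fintype V] [DecidableEq α]
    [DecidableEq β] {f : V → α} {g : α → β} (hg : Function.Injective g) {s : ℕ}
    (hf : ∀ a, #{v | f v = a} ≤ s) (b : β) : #{v | g (f v) = b} ≤ s := by
  by_cases hb : ∃ a, g a = b
  · obtain ⟨a, rfl⟩ := hb
    simpa only [hg.eq_iff] using hf a
  · push Not at hb
    simp [hb]

theorem exists_refinement_card_fiber_le {V ι β : Type*} [Fintype V] [Fintype ι] [Fintype β]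
    [DecidableEq β] (c : V → ι) {s : ℕ} (hs : 0 < s) (hβ : card ι + card V / s ≤ card β) :
    ∃ f : V → β, (∀ u v, f u = f v → c u = c v) ∧ ∀ b, #{v | f v = b} ≤ s := by
  classical
  choose g hg using fun i => exists_fin_div_succ_card_fiber_le {v // c v = i} hs
  let F : V → Σ i, Fin (card {v // c v = i} / s + 1) := fun v => ⟨c v, g (c v) ⟨v, rfl⟩⟩
  have hF : ∀ j, #{v | F v = j} ≤ s := by
    rintro ⟨i, q⟩
    calc #{v | F v = ⟨i, q⟩}
        ≤ #(({x | g i x = q} : Finset _).map (Function.Embedding.subtype _)) := by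
          refine card_le_card fun v hv => ?_
          obtain ⟨rfl, hq⟩ := Sigma.mk.inj_iff.1 (mem_filter.1 hv).2
          exact mem_map.2 ⟨⟨v, rfl⟩, by simpa using eq_of_heq hq, rfl⟩
      _ ≤ s := (card_map _).trans_le (hg i q)
  have hcard : card (Σ i, Fin (card {v // c v = i} / s + 1)) ≤ card β := by
    have hsum : ∑ i, card {v // c v = i} = card V :=
      Fintype.card_sigma.symm.trans (card_congr (Equiv.sigmaFiberEquiv c))
    calc card (Σ i, Fin (card {v // c v = i} / s + 1))
        = ∑ i, card {v // c v = i} / s + card ι := by simp [Finset.sum_add_distrib]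
      _ ≤ card V / s + card ι := by
          gcongr
          exact hsum ▸ Nat.sum_div_le_sum_div _ _ hs
      _ ≤ card β := by omega
  obtain ⟨emb⟩ := Function.Embedding.nonempty_of_card_le hcard
  exact ⟨fun v => emb (F v), fun u v h => congrArg Sigma.fst (emb.injective h),
    card_fiber_comp_le_of_injective emb.injective hF⟩

theorem coloring_refinement {V : Type*} [Fintype V] (G : SimpleGraph V) (k : ℕ)
    (h : G.Colorable k) :
    ∃ c : G.Coloring (Fin (k + ⌈Real.sqrt (Fintype.card V)⌉₊)),
      ∀ i, (Finset.univ.filter fun v => c v = i).card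
        ≤ 2 * ⌈Real.sqrt (Fintype.card V)⌉₊ := by
  obtain ⟨c⟩ := h
  set s := ⌈√(card V : ℝ)⌉₊
  rcases isEmpty_or_nonempty V with _ | _
  · exact ⟨Coloring.mk isEmptyElim fun {u} => isEmptyElim u, by simp⟩
  have hs : 0 < s := Nat.ceil_pos.2 (Real.sqrt_pos.2 (by exact_mod_cast Fintype.card_pos))
  have hns : card V / s ≤ s := Nat.div_le_of_le_mul (Nat.le_ceil_sqrt_mul_self _)
  obtain ⟨f, hfc, hf⟩ :=
    exists_refinement_card_fiber_le (β := Fin (k + s)) c hs (by simp only [Fintype.card_fin]; omega)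
  exact ⟨Coloring.mk f fun hadj hfuv => c.valid hadj (hfc _ _ hfuv),
    fun j => (hf j).trans (by omega)⟩
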